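/- Let X be a nonempty set, let δ > 0, let Θ₀, Θ₁ : X → ℝ be functions, let Θ̂ ∈ ℝ, and let p ∈ X be a point at which Θ₀ attains its infimum, i.e. Θ₀(p) = inf_X Θ₀. Assume: (i) Θ̂ ≥ Θ₀(p) + 100δ; (ii) max(Θ₀(x), Θ̂) ≤ Θ₁(x) ≤ max(Θ₀(x), Θ̂) + δ for all x ∈ X; (iii) Θ₁(x) = Θ̂ for every x with Θ₀(x) + δ ≤ Θ̂ − δ; and (iv) Θ₁(x) = Θ₀(x) for every x with Θ̂ + δ ≤ Θ₀(x) − δ. Then sup_X (Θ₁ − Θ₀) = Θ₁(p) − Θ₀(p) = Θ̂ − Θ₀(p); in particular the supremum of Θ₁ − Θ₀ is attained at p. -/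
import Mathlib


/-- Lemma 7.2(vi): under the stated properties of the regularized maximum
`Θ₁` of `Θ₀` and `Θ̂`, the supremum of `Θ₁ - Θ₀` is attained at a point `p`
where `Θ₀` attains its infimum, and equals `Θ̂ - Θ₀(p)`. -/
theorem stmt_12 (X : Type*) [Nonempty X] (δ : ℝ) (hδ : 0 < δ)
    (Θ₀ Θ₁ : X → ℝ) (Θhat : ℝ) (p : X)
    (hp : ∀ x, Θ₀ p ≤ Θ₀ x)
    (hi : Θ₀ p + 100 * δ ≤ Θhat)
    (hii : ∀ x, max (Θ₀ x) Θhat ≤ Θ₁ x ∧ Θ₁ x ≤ max (Θ₀ x) Θhat + δ)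
    (hiii : ∀ x, Θ₀ x + δ ≤ Θhat - δ → Θ₁ x = Θhat)
    (hiv : ∀ x, Θhat + δ ≤ Θ₀ x - δ → Θ₁ x = Θ₀ x) :
    (∀ x, Θ₁ x - Θ₀ x ≤ Θ₁ p - Θ₀ p) ∧
      (⨆ x, (Θ₁ x - Θ₀ x)) = Θ₁ p - Θ₀ p ∧
      Θ₁ p - Θ₀ p = Θhat - Θ₀ p := by
  have hΘ₁p : Θ₁ p = Θhat := hiii p (by linarith)
  have heq : Θ₁ p - Θ₀ p = Θhat - Θ₀ p := by rw [hΘ₁p]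
  have hub : ∀ x, Θ₁ x - Θ₀ x ≤ Θ₁ p - Θ₀ p := by
    intro x
    rw [heq]
    by_cases h1 : Θhat + δ ≤ Θ₀ x - δ
    · rw [hiv x h1]; linarith
    · by_cases h2 : Θ₀ x + δ ≤ Θhat - δ
      · rw [hiii x h2]
        have := hp x
        linarith
      · have h3 := (hii x).2
        have hhp := hp x
        rcases le_total (Θ₀ x) Θhat with h | h
        · rw [max_eq_right h] at h3; linarith
        · rw [max_eq_left h] at h3; linarith
  refine ⟨hub, ?_, heq⟩
  exact le_antisymm (ciSup_le hub)
    (le_ciSup ⟨Θ₁ p - Θ₀ p, Set.forall_mem_range.2 hub⟩ p)
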